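/- For every integer n > 2, sptbar_1_o(n) + sptbar_1_o(n−2) = 2·pbar_e(n−1) + pbar_oex(n−1), where pbar_e(m) is the number of overpartitions of m into even parts and pbar_oex(m) is the number of overpartitions of m into odd parts with no non-overlined parts equal to 1. -/

import Mathlib

open scoped BigOperators

/-- The finite q-Pochhammer symbol `(a; q)_N = ∏_{j=0}^{N-1} (1 - a q^j)`. -/
noncomputable def qPoch (a q : ℂ) (N : ℕ) : ℂ := ∏ j ∈ Finset.range N, (1 - a * q ^ j)

/-- The infinite q-Pochhammer symbol `(a; q)_∞ = ∏_{j=0}^{∞} (1 - a q^j)`. -/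
noncomputable def qPochInf (a q : ℂ) : ℂ := ∏' j : ℕ, (1 - a * q ^ j)

/-- An overpartition of `n`: a multiset of positive non-overlined parts together with a
finset of positive overlined parts (the overlined parts are distinct), with total sum `n`. -/
structure Overpartition (n : ℕ) where
  parts : Multiset ℕ
  overlined : Finset ℕ
  parts_pos : ∀ x ∈ parts, 0 < x
  overlined_pos : ∀ x ∈ overlined, 0 < x
  sum_eq : parts.sum + ∑ x ∈ overlined, x = n

/-- `s` is the smallest non-overlined part of `π`, it appears exactly `k` times among the
non-overlined parts, and every overlined part is greater than `s`. -/
def SptbarCond (k : ℕ) {n : ℕ} (π : Overpartition n) (s : ℕ) : Prop :=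
  s ∈ π.parts ∧ (∀ x ∈ π.parts, s ≤ x) ∧ π.parts.count s = k ∧ ∀ x ∈ π.overlined, s < x

/-- `SptbarCond` together with: every part other than `s` is incongruent to `s` modulo 2. -/
def SptbarOCond (k : ℕ) {n : ℕ} (π : Overpartition n) (s : ℕ) : Prop :=
  SptbarCond k π s ∧ (∀ x ∈ π.parts, x ≠ s → x % 2 ≠ s % 2) ∧
    ∀ x ∈ π.overlined, x % 2 ≠ s % 2

/-- The number of parts of `π` that are greater than `s`. -/
def numGreater {n : ℕ} (π : Overpartition n) (s : ℕ) : ℕ :=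
  (π.parts.filter (fun x => s < x)).card + π.overlined.card

/-- The total number of parts of the overpartition `π`. -/
def numParts {n : ℕ} (π : Overpartition n) : ℕ :=
  π.parts.card + π.overlined.card

/-- `sptbar k n`: the number of overpartitions of `n` whose smallest non-overlined part `s`
appears exactly `k` times and all of whose overlined parts are greater than `s`. -/
noncomputable def sptbar (k n : ℕ) : ℕ :=
  Nat.card {π : Overpartition n // ∃ s, SptbarCond k π s}

/-- `sptbar' k n = a_e(k,n) - a_o(k,n)`. -/
noncomputable def sptbar' (k n : ℕ) : ℤ :=
  (Nat.card {π : Overpartition n // ∃ s, SptbarCond k π s ∧ Even (numGreater π s)} : ℤ) -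
    (Nat.card {π : Overpartition n // ∃ s, SptbarCond k π s ∧ Odd (numGreater π s)} : ℤ)

/-- `sptbarO k n`: as `sptbar k n`, with all parts other than the smallest non-overlined part
incongruent to it modulo 2. -/
noncomputable def sptbarO (k n : ℕ) : ℕ :=
  Nat.card {π : Overpartition n // ∃ s, SptbarOCond k π s}

/-- `sptbarO' k n = b_e(k,n) - b_o(k,n)`. -/
noncomputable def sptbarO' (k n : ℕ) : ℤ :=
  (Nat.card {π : Overpartition n // ∃ s, SptbarOCond k π s ∧ Even (numGreater π s)} : ℤ) -
    (Nat.card {π : Overpartition n // ∃ s, SptbarOCond k π s ∧ Odd (numGreater π s)} : ℤ)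

/-- The number of overpartitions of `n` into even parts. -/
noncomputable def pbarE (n : ℕ) : ℕ :=
  Nat.card {π : Overpartition n // (∀ x ∈ π.parts, Even x) ∧ ∀ x ∈ π.overlined, Even x}

/-- The number of overpartitions of `n` into odd parts with no non-overlined part equal to 1. -/
noncomputable def pbarOex (n : ℕ) : ℕ :=
  Nat.card {π : Overpartition n //
    (∀ x ∈ π.parts, Odd x) ∧ (∀ x ∈ π.overlined, Odd x) ∧ (1 : ℕ) ∉ π.parts}

/-- Among overpartitions of `n` into odd parts with no non-overlined 1's: the number of those
with an even number of parts minus the number of those with an odd number of parts. -/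
noncomputable def pbarOex' (n : ℕ) : ℤ :=
  (Nat.card {π : Overpartition n // ((∀ x ∈ π.parts, Odd x) ∧ (∀ x ∈ π.overlined, Odd x) ∧
      (1 : ℕ) ∉ π.parts) ∧ Even (numParts π)} : ℤ) -
    (Nat.card {π : Overpartition n // ((∀ x ∈ π.parts, Odd x) ∧ (∀ x ∈ π.overlined, Odd x) ∧
      (1 : ℕ) ∉ π.parts) ∧ Odd (numParts π)} : ℤ)

/-- `sptkd k n`: the number of partitions of `n` whose smallest part appears exactly `k`
times and all of whose remaining parts are distinct. -/
noncomputable def sptkd (k n : ℕ) : ℕ :=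
  Nat.card {m : Multiset ℕ // (∀ x ∈ m, 0 < x) ∧ m.sum = n ∧
    ∃ s, s ∈ m ∧ (∀ x ∈ m, s ≤ x) ∧ m.count s = k ∧ ∀ x ∈ m, x ≠ s → m.count x = 1}

/-!
An overpartition counted by `sptbarO 1` is its smallest non-overlined part `s` together with a
rest whose parts all exceed `s` and have the other parity. Deleting `s = 1` from an overpartition
of `n` leaves an overpartition of `n - 1` into even parts. For `s > 1`, replacing `s` by an
overlined `s - 1` (size `n`) or by a non-overlined `s + 1` (size `n - 2`) yields an overpartition
of `n - 1` into parts of a single parity with no non-overlined `1`, whose smallest part is `s ∓ 1`: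
overlined only in the first case, non-overlined in the second. Each such overpartition arises
exactly once, and those into even (odd) parts are counted by `pbarE (n - 1)` (`pbarOex (n - 1)`).
-/

theorem Nat.card_subtype_or_of_disjoint {α : Type*} [Finite α] {p q : α → Prop}
    (h : ∀ x, p x → ¬q x) :
    Nat.card {x // p x ∨ q x} = Nat.card {x // p x} + Nat.card {x // q x} := by
  classical
  rw [← Nat.card_sum]
  exact Nat.card_congr (subtypeOrEquiv p q (Pi.disjoint_iff.mpr fun x => by
    simpa [Prop.disjoint_iff] using h x))

noncomputable def subtypeExistsEquivSigma {α ι : Type*} {p : ι → Prop} {P : α → ι → Prop}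
    (hP : ∀ x i j, P x i → P x j → i = j) :
    {x // ∃ i, p i ∧ P x i} ≃ Σ i : {i // p i}, {x // P x i} where
  toFun x := ⟨⟨x.2.choose, x.2.choose_spec.1⟩, x.1, x.2.choose_spec.2⟩
  invFun y := ⟨y.2.1, y.1.1, y.1.2, y.2.2⟩
  left_inv _ := rfl
  right_inv y := Sigma.subtype_ext
    (Subtype.ext (hP _ _ _ (Exists.choose_spec (p := fun i => p i ∧ P y.2.1 i) _).2 y.2.2)) rfl

theorem Nat.card_subtype_exists_congr {α β ι : Type*} (p : ι → Prop) {P : α → ι → Prop}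
    {Q : β → ι → Prop} (hP : ∀ x i j, P x i → P x j → i = j)
    (hQ : ∀ y i j, Q y i → Q y j → i = j) (e : ∀ i, p i → ({x // P x i} ≃ {y // Q y i})) :
    Nat.card {x // ∃ i, p i ∧ P x i} = Nat.card {y // ∃ i, p i ∧ Q y i} :=
  Nat.card_congr <| (subtypeExistsEquivSigma hP).trans <|
    (Equiv.sigmaCongrRight fun i : {i // p i} => e i.1 i.2).trans (subtypeExistsEquivSigma hQ).symm

def OppParityAbove (s x : ℕ) : Prop := s < x ∧ x % 2 ≠ s % 2

theorem oppParityAbove_one_iff_even {x : ℕ} (hx : 0 < x) : OppParityAbove 1 x ↔ Even x := by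
  rw [OppParityAbove, Nat.even_iff]
  omega

namespace Overpartition

variable {m : ℕ}

theorem ext {π ρ : Overpartition m} (hparts : π.parts = ρ.parts)
    (hoverlined : π.overlined = ρ.overlined) : π = ρ := by
  cases π; cases ρ; simp_all

theorem parts_le (π : Overpartition m) : π.parts ≤ m • Multiset.range (m + 1) := by
  rw [Multiset.le_iff_count]
  intro a
  by_cases ha : a ∈ π.parts
  · have hsum := π.sum_eq
    have ha_le : a ≤ π.parts.sum := Multiset.le_sum_of_mem ha
    have hcard : Multiset.card π.parts • 1 ≤ π.parts.sum :=
      Multiset.card_nsmul_le_sum π.parts_pos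
    have hcount := π.parts.count_le_card a
    rw [Multiset.count_nsmul, Multiset.count_eq_one_of_mem (Multiset.nodup_range _)
      (Multiset.mem_range.mpr (by omega))]
    simp only [smul_eq_mul, mul_one] at hcard
    omega
  · simp [Multiset.count_eq_zero.mpr ha]

theorem overlined_subset (π : Overpartition m) : π.overlined ⊆ Finset.range (m + 1) := by
  intro a ha
  have := Finset.single_le_sum (fun x _ => Nat.zero_le x) ha
  have := π.sum_eq
  exact Finset.mem_range.mpr (by omega)

instance : Finite (Overpartition m) :=
  Finite.of_injective
    (fun π : Overpartition m =>
      ((⟨π.parts, π.parts_le⟩ : Set.Iic (m • Multiset.range (m + 1))),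
        (⟨π.overlined, π.overlined_subset⟩ : Set.Iic (Finset.range (m + 1)))))
    fun _ _ h => by
      simp only [Prod.mk.injEq] at h
      exact ext (congrArg Subtype.val h.1) (congrArg Subtype.val h.2)

def IsOverlinedMin (ρ : Overpartition m) (a : ℕ) : Prop :=
  a ∈ ρ.overlined ∧ (∀ x ∈ ρ.parts, a < x) ∧ ∀ x ∈ ρ.overlined, a ≤ x

def IsPartMin (ρ : Overpartition m) (a : ℕ) : Prop :=
  a ∈ ρ.parts ∧ (∀ x ∈ ρ.parts, a ≤ x) ∧ ∀ x ∈ ρ.overlined, a ≤ x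

def PartsCongrModTwo (ρ : Overpartition m) (a : ℕ) : Prop :=
  (∀ x ∈ ρ.parts, x % 2 = a % 2) ∧ ∀ x ∈ ρ.overlined, x % 2 = a % 2

theorem IsOverlinedMin.unique {ρ : Overpartition m} {a b : ℕ} (ha : IsOverlinedMin ρ a)
    (hb : IsOverlinedMin ρ b) : a = b :=
  le_antisymm (ha.2.2 b hb.1) (hb.2.2 a ha.1)

theorem IsPartMin.unique {ρ : Overpartition m} {a b : ℕ} (ha : IsPartMin ρ a)
    (hb : IsPartMin ρ b) : a = b :=
  le_antisymm (ha.2.1 b hb.1) (hb.2.1 a ha.1)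

theorem not_isOverlinedMin_of_isPartMin {ρ : Overpartition m} {a b : ℕ} (ha : IsPartMin ρ a) :
    ¬IsOverlinedMin ρ b := fun hb =>
  absurd (hb.2.1 a ha.1) (not_lt.mpr (ha.2.2 b hb.1))

theorem exists_isPartMin_or_isOverlinedMin (ρ : Overpartition m) (hm : 0 < m) :
    ∃ a, IsPartMin ρ a ∨ IsOverlinedMin ρ a := by
  have hpart : ∃ a, a ∈ ρ.parts ∨ a ∈ ρ.overlined := by
    by_contra! h
    have := ρ.sum_eq
    rw [Multiset.eq_zero_of_forall_notMem fun a => (h a).1,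
      Finset.eq_empty_of_forall_notMem fun a => (h a).2] at this
    simp at this
    omega
  classical
  have hmin : ∀ x, x ∈ ρ.parts ∨ x ∈ ρ.overlined → Nat.find hpart ≤ x :=
    fun x hx => Nat.find_min' hpart hx
  by_cases hmem : Nat.find hpart ∈ ρ.parts
  · exact ⟨_, .inl ⟨hmem, fun x hx => hmin x (.inl hx), fun x hx => hmin x (.inr hx)⟩⟩
  · refine ⟨_, .inr ⟨(Nat.find_spec hpart).resolve_left hmem, fun x hx => ?_,
      fun x hx => hmin x (.inr hx)⟩⟩
    exact lt_of_le_of_ne (hmin x (.inl hx)) (by rintro rfl; exact hmem hx)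

theorem sptbarOCond_unique {k : ℕ} {π : Overpartition m} {s t : ℕ} (hs : SptbarOCond k π s)
    (ht : SptbarOCond k π t) : s = t :=
  le_antisymm (hs.1.2.1 t ht.1.1) (ht.1.2.1 s hs.1.1)

theorem sptbarOCond_one_iff {π : Overpartition m} {s : ℕ} :
    SptbarOCond 1 π s ↔ s ∈ π.parts ∧ (∀ x ∈ π.parts.erase s, OppParityAbove s x) ∧
      ∀ x ∈ π.overlined, OppParityAbove s x := by
  constructor
  · rintro ⟨⟨hs, hmin, hcount, hov⟩, hpar, hovpar⟩
    refine ⟨hs, fun x hx => ?_, fun x hx => ⟨hov x hx, hovpar x hx⟩⟩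
    have hxs : x ≠ s := by
      rintro rfl
      rw [← Multiset.count_pos, Multiset.count_erase_self, hcount] at hx
      exact lt_irrefl 0 hx
    have hx' := Multiset.mem_of_mem_erase hx
    exact ⟨lt_of_le_of_ne (hmin x hx') hxs.symm, hpar x hx' hxs⟩
  · rintro ⟨hs, hrest, hov⟩
    have hrest' : ∀ x ∈ π.parts, x ≠ s → OppParityAbove s x :=
      fun x hx hxs => hrest x ((Multiset.mem_erase_of_ne hxs).mpr hx)
    have hsrest : s ∉ π.parts.erase s := fun h => lt_irrefl s (hrest s h).1
    refine ⟨⟨hs, fun x hx => ?_, ?_, fun x hx => (hov x hx).1⟩,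
      fun x hx hxs => (hrest' x hx hxs).2, fun x hx => (hov x hx).2⟩
    · rcases eq_or_ne x s with rfl | hxs
      · exact le_rfl
      · exact (hrest' x hx hxs).1.le
    · have hcount := Multiset.count_erase_self s π.parts
      rw [Multiset.count_eq_zero.mpr hsrest] at hcount
      have := Multiset.count_pos.mpr hs
      omega

theorem isOverlinedMin_and_partsCongrModTwo_iff {ρ : Overpartition m} {a : ℕ} :
    IsOverlinedMin ρ a ∧ PartsCongrModTwo ρ a ↔ a ∈ ρ.overlined ∧
      (∀ x ∈ ρ.parts, OppParityAbove (a + 1) x) ∧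
      ∀ x ∈ ρ.overlined.erase a, OppParityAbove (a + 1) x := by
  unfold OppParityAbove
  constructor
  · rintro ⟨⟨ha, hparts, hov⟩, hpar, hovpar⟩
    refine ⟨ha, fun x hx => ?_, fun x hx => ?_⟩
    · have := hparts x hx; have := hpar x hx; omega
    · have := Finset.ne_of_mem_erase hx
      have hx := Finset.mem_of_mem_erase hx
      have := hov x hx; have := hovpar x hx; omega
  · rintro ⟨ha, hparts, hov⟩
    have hov' : ∀ x ∈ ρ.overlined, a ≤ x ∧ x % 2 = a % 2 := by
      intro x hx
      rcases eq_or_ne x a with rfl | hxa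
      · exact ⟨le_rfl, rfl⟩
      · have := hov x (Finset.mem_erase.mpr ⟨hxa, hx⟩); omega
    refine ⟨⟨ha, fun x hx => ?_, fun x hx => (hov' x hx).1⟩, fun x hx => ?_,
      fun x hx => (hov' x hx).2⟩
    · have := hparts x hx; omega
    · have := hparts x hx; omega

theorem isPartMin_and_partsCongrModTwo_iff {ρ : Overpartition m} {a : ℕ} :
    IsPartMin ρ (a + 1) ∧ PartsCongrModTwo ρ (a + 1) ↔ a + 1 ∈ ρ.parts ∧
      (∀ x ∈ ρ.parts.erase (a + 1), OppParityAbove a x) ∧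
      ∀ x ∈ ρ.overlined, OppParityAbove a x := by
  unfold OppParityAbove
  constructor
  · rintro ⟨⟨ha, hparts, hov⟩, hpar, hovpar⟩
    refine ⟨ha, fun x hx => ?_, fun x hx => ?_⟩
    · have hx := Multiset.mem_of_mem_erase hx
      have := hparts x hx; have := hpar x hx; omega
    · have := hov x hx; have := hovpar x hx; omega
  · rintro ⟨ha, hparts, hov⟩
    have hparts' : ∀ x ∈ ρ.parts, a + 1 ≤ x ∧ x % 2 = (a + 1) % 2 := by
      intro x hx
      rcases eq_or_ne x (a + 1) with rfl | hxa
      · exact ⟨le_rfl, rfl⟩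
      · have := hparts x ((Multiset.mem_erase_of_ne hxa).mpr hx); omega
    refine ⟨⟨ha, fun x hx => (hparts' x hx).1, fun x hx => ?_⟩, fun x hx => (hparts' x hx).2,
      fun x hx => ?_⟩
    · have := hov x hx; omega
    · have := hov x hx; omega

def sptbarOOneEquivEven (N : ℕ) :
    {π : Overpartition (N + 1) // SptbarOCond 1 π 1} ≃
      {ρ : Overpartition N // (∀ x ∈ ρ.parts, Even x) ∧ ∀ x ∈ ρ.overlined, Even x} where
  toFun π :=
    have hπ := sptbarOCond_one_iff.mp π.2
    ⟨{ parts := π.1.parts.erase 1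
       overlined := π.1.overlined
       parts_pos := fun x hx => π.1.parts_pos x (Multiset.mem_of_mem_erase hx)
       overlined_pos := π.1.overlined_pos
       sum_eq := by
         have := Multiset.sum_erase hπ.1
         have := π.1.sum_eq
         omega },
      fun x hx => (oppParityAbove_one_iff_even
          (π.1.parts_pos x (Multiset.mem_of_mem_erase hx))).mp (hπ.2.1 x hx),
      fun x hx => (oppParityAbove_one_iff_even (π.1.overlined_pos x hx)).mp (hπ.2.2 x hx)⟩
  invFun ρ :=
    ⟨{ parts := 1 ::ₘ ρ.1.parts
       overlined := ρ.1.overlined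
       parts_pos := by simpa using ρ.1.parts_pos
       overlined_pos := ρ.1.overlined_pos
       sum_eq := by
         have := ρ.1.sum_eq
         rw [Multiset.sum_cons]
         omega },
      sptbarOCond_one_iff.mpr ⟨Multiset.mem_cons_self _ _, by
        rw [Multiset.erase_cons_head]
        exact fun x hx => (oppParityAbove_one_iff_even (ρ.1.parts_pos x hx)).mpr (ρ.2.1 x hx),
        fun x hx => (oppParityAbove_one_iff_even (ρ.1.overlined_pos x hx)).mpr (ρ.2.2 x hx)⟩⟩
  left_inv π := Subtype.ext <| ext (Multiset.cons_erase (sptbarOCond_one_iff.mp π.2).1) rfl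
  right_inv ρ := Subtype.ext <| ext (Multiset.erase_cons_head _ _) rfl

def sptbarOSuccEquivOverlinedMin (N : ℕ) {a : ℕ} (ha : 0 < a) :
    {π : Overpartition (N + 1) // SptbarOCond 1 π (a + 1)} ≃
      {ρ : Overpartition N // IsOverlinedMin ρ a ∧ PartsCongrModTwo ρ a} where
  toFun π :=
    have hπ := sptbarOCond_one_iff.mp π.2
    have haπ : a ∉ π.1.overlined := fun h => by have := (hπ.2.2 a h).1; omega
    ⟨{ parts := π.1.parts.erase (a + 1)
       overlined := insert a π.1.overlined
       parts_pos := fun x hx => π.1.parts_pos x (Multiset.mem_of_mem_erase hx)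
       overlined_pos := by simpa [ha] using π.1.overlined_pos
       sum_eq := by
         have := Multiset.sum_erase hπ.1
         have := π.1.sum_eq
         rw [Finset.sum_insert haπ]
         omega },
      isOverlinedMin_and_partsCongrModTwo_iff.mpr
        ⟨Finset.mem_insert_self _ _, hπ.2.1, by rw [Finset.erase_insert haπ]; exact hπ.2.2⟩⟩
  invFun ρ :=
    have hρ := isOverlinedMin_and_partsCongrModTwo_iff.mp ρ.2
    ⟨{ parts := (a + 1) ::ₘ ρ.1.parts
       overlined := ρ.1.overlined.erase a
       parts_pos := by simpa using ρ.1.parts_pos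
       overlined_pos := fun x hx => ρ.1.overlined_pos x (Finset.mem_of_mem_erase hx)
       sum_eq := by
         have := Finset.add_sum_erase _ (fun x => x) hρ.1
         have := ρ.1.sum_eq
         rw [Multiset.sum_cons]
         omega },
      sptbarOCond_one_iff.mpr
        ⟨Multiset.mem_cons_self _ _, by rw [Multiset.erase_cons_head]; exact hρ.2.1, hρ.2.2⟩⟩
  left_inv π := by
    have hπ := sptbarOCond_one_iff.mp π.2
    refine Subtype.ext <| ext (Multiset.cons_erase hπ.1) (Finset.erase_insert fun h => ?_)
    have := (hπ.2.2 a h).1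
    omega
  right_inv ρ := Subtype.ext <| ext (Multiset.erase_cons_head _ _)
    (Finset.insert_erase (isOverlinedMin_and_partsCongrModTwo_iff.mp ρ.2).1)

def sptbarOEquivPartMin (M : ℕ) {a : ℕ} (ha : 0 < a) :
    {π : Overpartition M // SptbarOCond 1 π a} ≃
      {ρ : Overpartition (M + 1) // IsPartMin ρ (a + 1) ∧ PartsCongrModTwo ρ (a + 1)} where
  toFun π :=
    have hπ := sptbarOCond_one_iff.mp π.2
    ⟨{ parts := (a + 1) ::ₘ π.1.parts.erase a
       overlined := π.1.overlined
       parts_pos := by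
         simpa using fun x hx => π.1.parts_pos x (Multiset.mem_of_mem_erase hx)
       overlined_pos := π.1.overlined_pos
       sum_eq := by
         have := Multiset.sum_erase hπ.1
         have := π.1.sum_eq
         rw [Multiset.sum_cons]
         omega },
      isPartMin_and_partsCongrModTwo_iff.mpr
        ⟨Multiset.mem_cons_self _ _, by rw [Multiset.erase_cons_head]; exact hπ.2.1, hπ.2.2⟩⟩
  invFun ρ :=
    have hρ := isPartMin_and_partsCongrModTwo_iff.mp ρ.2
    ⟨{ parts := a ::ₘ ρ.1.parts.erase (a + 1)
       overlined := ρ.1.overlined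
       parts_pos := by
         simpa [ha] using fun x hx => ρ.1.parts_pos x (Multiset.mem_of_mem_erase hx)
       overlined_pos := ρ.1.overlined_pos
       sum_eq := by
         have := Multiset.sum_erase hρ.1
         have := ρ.1.sum_eq
         rw [Multiset.sum_cons]
         omega },
      sptbarOCond_one_iff.mpr
        ⟨Multiset.mem_cons_self _ _, by rw [Multiset.erase_cons_head]; exact hρ.2.1, hρ.2.2⟩⟩
  left_inv π := Subtype.ext <| ext (by
    simp only [Multiset.erase_cons_head]
    exact Multiset.cons_erase (sptbarOCond_one_iff.mp π.2).1) rfl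
  right_inv ρ := Subtype.ext <| ext (by
    simp only [Multiset.erase_cons_head]
    exact Multiset.cons_erase (isPartMin_and_partsCongrModTwo_iff.mp ρ.2).1) rfl

theorem even_or_odd_without_one_iff (ρ : Overpartition m) :
    ((∀ x ∈ ρ.parts, Even x) ∧ ∀ x ∈ ρ.overlined, Even x) ∨
      ((∀ x ∈ ρ.parts, Odd x) ∧ (∀ x ∈ ρ.overlined, Odd x) ∧ 1 ∉ ρ.parts) ↔
    (∃ c, PartsCongrModTwo ρ c) ∧ 1 ∉ ρ.parts := by
  simp only [PartsCongrModTwo, Nat.even_iff, Nat.odd_iff]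
  constructor
  · rintro (⟨hp, ho⟩ | ⟨hp, ho, h1⟩)
    · exact ⟨⟨0, hp, ho⟩, fun h => by have := hp 1 h; omega⟩
    · exact ⟨⟨1, hp, ho⟩, h1⟩
  · rintro ⟨⟨c, hp, ho⟩, h1⟩
    rcases Nat.mod_two_eq_zero_or_one c with hc | hc
    · exact .inl ⟨fun x hx => (hp x hx).trans hc, fun x hx => (ho x hx).trans hc⟩
    · exact .inr ⟨fun x hx => (hp x hx).trans hc, fun x hx => (ho x hx).trans hc, h1⟩

theorem exists_partsCongrModTwo_and_one_notMem_iff {ρ : Overpartition m} (hm : 0 < m) :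
    (∃ c, PartsCongrModTwo ρ c) ∧ 1 ∉ ρ.parts ↔
      (∃ a, 0 < a ∧ IsOverlinedMin ρ a ∧ PartsCongrModTwo ρ a) ∨
        ∃ a, 0 < a ∧ IsPartMin ρ (a + 1) ∧ PartsCongrModTwo ρ (a + 1) := by
  constructor
  · rintro ⟨⟨c, hp, ho⟩, h1⟩
    have hcongr : ∀ a, a ∈ ρ.parts ∨ a ∈ ρ.overlined → PartsCongrModTwo ρ a := by
      rintro a (ha | ha)
      exacts [⟨fun x hx => (hp x hx).trans (hp a ha).symm,
          fun x hx => (ho x hx).trans (hp a ha).symm⟩,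
        ⟨fun x hx => (hp x hx).trans (ho a ha).symm,
          fun x hx => (ho x hx).trans (ho a ha).symm⟩]
    obtain ⟨a, hmin | hmin⟩ := exists_isPartMin_or_isOverlinedMin ρ hm
    · have := ρ.parts_pos a hmin.1
      have ha1 : a ≠ 1 := by rintro rfl; exact h1 hmin.1
      refine .inr ⟨a - 1, by omega, ?_⟩
      rw [Nat.sub_add_cancel (by omega)]
      exact ⟨hmin, hcongr a (.inl hmin.1)⟩
    · exact .inl ⟨a, ρ.overlined_pos a hmin.1, hmin, hcongr a (.inr hmin.1)⟩
  · rintro (⟨a, ha, hmin, hcongr⟩ | ⟨a, ha, hmin, hcongr⟩)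
    · exact ⟨⟨a, hcongr⟩, fun h => by have := hmin.2.1 1 h; omega⟩
    · exact ⟨⟨a + 1, hcongr⟩, fun h => by have := hmin.2.1 1 h; omega⟩

end Overpartition

open Overpartition

theorem sptbarO_one_succ (N : ℕ) :
    sptbarO 1 (N + 1) = pbarE N +
      Nat.card {ρ : Overpartition N // ∃ a, 0 < a ∧ IsOverlinedMin ρ a ∧ PartsCongrModTwo ρ a} := by
  have hsplit : ∀ π : Overpartition (N + 1), (∃ s, SptbarOCond 1 π s) ↔
      SptbarOCond 1 π 1 ∨ ∃ a, 0 < a ∧ SptbarOCond 1 π (a + 1) := by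
    refine fun π => ⟨fun ⟨s, hs⟩ => ?_, ?_⟩
    · have := π.parts_pos s hs.1.1
      rcases eq_or_ne s 1 with rfl | hs1
      · exact .inl hs
      · exact .inr ⟨s - 1, by omega, by rwa [Nat.sub_add_cancel (by omega)]⟩
    · rintro (h | ⟨a, -, h⟩)
      exacts [⟨1, h⟩, ⟨a + 1, h⟩]
  rw [sptbarO, Nat.card_congr (Equiv.subtypeEquivRight hsplit),
    Nat.card_subtype_or_of_disjoint fun π h1 ⟨a, ha, h⟩ => by
      have := sptbarOCond_unique h1 h; omega,
    Nat.card_congr (sptbarOOneEquivEven N)]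
  congr 1
  exact Nat.card_subtype_exists_congr _ (fun _ _ _ hi hj => by
      have := sptbarOCond_unique hi hj; omega)
    (fun _ _ _ hi hj => hi.1.unique hj.1) fun _ ha => sptbarOSuccEquivOverlinedMin N ha

theorem sptbarO_one_eq_card_isPartMin (M : ℕ) :
    sptbarO 1 M = Nat.card {ρ : Overpartition (M + 1) //
      ∃ a, 0 < a ∧ IsPartMin ρ (a + 1) ∧ PartsCongrModTwo ρ (a + 1)} := by
  have hpos : ∀ π : Overpartition M, (∃ s, SptbarOCond 1 π s) ↔
      ∃ s, 0 < s ∧ SptbarOCond 1 π s :=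
    fun π => ⟨fun ⟨s, hs⟩ => ⟨s, π.parts_pos s hs.1.1, hs⟩, fun ⟨s, _, hs⟩ => ⟨s, hs⟩⟩
  rw [sptbarO, Nat.card_congr (Equiv.subtypeEquivRight hpos)]
  exact Nat.card_subtype_exists_congr _ (fun _ _ _ => sptbarOCond_unique)
    (fun _ _ _ hi hj => by have := hi.1.unique hj.1; omega) fun _ ha => sptbarOEquivPartMin M ha

theorem pbarE_add_pbarOex {m : ℕ} (hm : 0 < m) :
    pbarE m + pbarOex m =
      Nat.card {ρ : Overpartition m // ∃ a, 0 < a ∧ IsOverlinedMin ρ a ∧ PartsCongrModTwo ρ a} +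
        Nat.card {ρ : Overpartition m //
          ∃ a, 0 < a ∧ IsPartMin ρ (a + 1) ∧ PartsCongrModTwo ρ (a + 1)} := by
  have hdisj : ∀ ρ : Overpartition m, ((∀ x ∈ ρ.parts, Even x) ∧ ∀ x ∈ ρ.overlined, Even x) →
      ¬((∀ x ∈ ρ.parts, Odd x) ∧ (∀ x ∈ ρ.overlined, Odd x) ∧ 1 ∉ ρ.parts) := by
    rintro ρ ⟨hpe, hoe⟩ ⟨hpo, hoo, -⟩
    obtain ⟨a, ha⟩ := exists_isPartMin_or_isOverlinedMin ρ hm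
    rcases ha with ha | ha
    exacts [Nat.not_even_iff_odd.mpr (hpo a ha.1) (hpe a ha.1),
      Nat.not_even_iff_odd.mpr (hoo a ha.1) (hoe a ha.1)]
  rw [pbarE, pbarOex, ← Nat.card_subtype_or_of_disjoint hdisj,
    ← Nat.card_subtype_or_of_disjoint fun ρ ⟨_, _, hmin, _⟩ ⟨_, _, hmin', _⟩ =>
      not_isOverlinedMin_of_isPartMin hmin' hmin]
  exact Nat.card_congr <| Equiv.subtypeEquivRight fun ρ =>
    (even_or_odd_without_one_iff ρ).trans (exists_partsCongrModTwo_and_one_notMem_iff hm)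

theorem sptbarO_one_add (n : ℕ) (hn : 2 < n) :
    sptbarO 1 n + sptbarO 1 (n - 2) = 2 * pbarE (n - 1) + pbarOex (n - 1) := by
  obtain ⟨N, rfl⟩ : ∃ N, n = N + 2 := ⟨n - 2, by omega⟩
  show sptbarO 1 (N + 1 + 1) + sptbarO 1 N = 2 * pbarE (N + 1) + pbarOex (N + 1)
  have hpbar := pbarE_add_pbarOex (m := N + 1) N.succ_pos
  rw [sptbarO_one_succ, sptbarO_one_eq_card_isPartMin]
  omega
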